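/- arXiv:1907.07632 — 2 statements merged into one kernel-verified Lean document; each statement's English description precedes it below -/
import Mathlib

section
/- Let E ⊂ ℝ^n be nonempty and compact, θ ∈ (0,1], 0 < r < 1, 0 ≤ s ≤ m ≤ n. Then C_{r,θ}^{s,m}(E) ≤ C_{r,θ}^{s,n}(E), and consequently r^s C_{r,θ}^{s,m}(E) ≤ S_{r,θ}^s(E). -/
open MeasureTheory Metric Set Filter Topology
open scoped ENNReal NNReal

noncomputable section

/-- Euclidean space `ℝ^n`. -/
abbrev Euc (n : ℕ) := EuclideanSpace ℝ (Fin n)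

instance matrixMeasurableSpace (n : ℕ) : MeasurableSpace (Matrix (Fin n) (Fin n) ℝ) :=
  inferInstanceAs (MeasurableSpace (Fin n → Fin n → ℝ))

/-- The restricted covering sum `S_{r,θ}^s(E)`: the infimum of `Σ_i |U_i|^s` over all
countable covers `{U_i}` of `E` with `r ≤ |U_i| ≤ r^θ`, valued in `ℝ≥0∞`. -/
def coverSum (n : ℕ) (E : Set (Euc n)) (θ s r : ℝ) : ℝ≥0∞ :=
  sInf { T : ℝ≥0∞ | ∃ 𝒰 : Set (Set (Euc n)), 𝒰.Countable ∧ E ⊆ ⋃₀ 𝒰 ∧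
    (∀ U ∈ 𝒰, r ≤ diam U ∧ diam U ≤ r ^ θ) ∧
    T = ∑' U : 𝒰, ENNReal.ofReal (diam (U : Set (Euc n)) ^ s) }

/-- Real-valued version of `coverSum`. -/
def Sval (n : ℕ) (E : Set (Euc n)) (θ s r : ℝ) : ℝ := (coverSum n E θ s r).toReal

/-- The quotient `log S_{r,θ}^s(E) / (-log r)`. -/
def Squot (n : ℕ) (E : Set (Euc n)) (θ s r : ℝ) : ℝ :=
  Real.log (Sval n E θ s r) / (-Real.log r)

/-- `N_δ(E)`: the smallest number of sets of diameter at most `δ` needed to cover `E`. -/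
def covNum (n : ℕ) (E : Set (Euc n)) (δ : ℝ) : ℕ :=
  sInf { k : ℕ | ∃ U : Fin k → Set (Euc n), E ⊆ ⋃ i, U i ∧ ∀ i, diam (U i) ≤ δ }

/-- The lower box-counting dimension of `E`. -/
def lowerBoxDim (n : ℕ) (E : Set (Euc n)) : ℝ :=
  liminf (fun δ : ℝ => Real.log (covNum n E δ) / (-Real.log δ)) (𝓝[>] 0)

/-- The upper box-counting dimension of `E`. -/
def upperBoxDim (n : ℕ) (E : Set (Euc n)) : ℝ :=
  limsup (fun δ : ℝ => Real.log (covNum n E δ) / (-Real.log δ)) (𝓝[>] 0)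

/-- The kernel `φ_{r,θ}^{s,m}`. -/
def phiK (n : ℕ) (m s θ r : ℝ) (x : Euc n) : ℝ :=
  if ‖x‖ < r then 1
  else if ‖x‖ < r ^ θ then (r / ‖x‖) ^ s
  else r ^ (θ * (m - s) + s) / ‖x‖ ^ m

/-- The kernel `φ̃_{r,θ}^s`. -/
def phiT (n : ℕ) (s θ r : ℝ) (x : Euc n) : ℝ :=
  if ‖x‖ < r then 1
  else if ‖x‖ ≤ r ^ θ then (r / ‖x‖) ^ s
  else 0

/-- The kernel `φ_r^m(x) = min{1, (r/|x|)^m}`. -/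
def phiB (n : ℕ) (m r : ℝ) (x : Euc n) : ℝ :=
  if ‖x‖ ≤ r then 1 else (r / ‖x‖) ^ m

/-- The energy `∬ φ(x-y) dμ(x)dμ(y)` of a measure with respect to a kernel `φ`. -/
def energy (n : ℕ) (φ : Euc n → ℝ) (μ : Measure (Euc n)) : ℝ :=
  ∫ x, ∫ y, φ (x - y) ∂μ ∂μ

/-- The potential `∫ φ(x-y) dμ(y)` of a measure at `x` with respect to a kernel `φ`. -/
def potential (n : ℕ) (φ : Euc n → ℝ) (μ : Measure (Euc n)) (x : Euc n) : ℝ :=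
  ∫ y, φ (x - y) ∂μ

/-- `μ` is a Borel probability measure supported on `E`. -/
def PMeasOn (n : ℕ) (E : Set (Euc n)) (μ : Measure (Euc n)) : Prop :=
  IsProbabilityMeasure μ ∧ μ Eᶜ = 0

/-- The capacity `C_{r,θ}^{s,m}(E)`: the reciprocal of the infimal energy of Borel
probability measures supported on `E` with respect to the kernel `φ_{r,θ}^{s,m}`. -/
def capacity (n : ℕ) (m s θ r : ℝ) (E : Set (Euc n)) : ℝ :=
  (sInf { e : ℝ | ∃ μ : Measure (Euc n), PMeasOn n E μ ∧ e = energy n (phiK n m s θ r) μ })⁻¹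

/-- The quotient `log C_{r,θ}^{s,m}(E) / (-log r)`. -/
def Cquot (n : ℕ) (m s θ : ℝ) (E : Set (Euc n)) (r : ℝ) : ℝ :=
  Real.log (capacity n m s θ r E) / (-Real.log r)

/-- `d` is the lower intermediate dimension `\underline{dim}_θ E`, i.e. the unique
`s ∈ [0,n]` such that `liminf_{r→0} log S_{r,θ}^s(E) / (-log r) = 0`. -/
def IsLowerInterDim (n : ℕ) (θ : ℝ) (E : Set (Euc n)) (d : ℝ) : Prop :=
  d ∈ Icc (0:ℝ) n ∧ liminf (fun r => Squot n E θ d r) (𝓝[>] 0) = 0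

/-- `d` is the upper intermediate dimension `\overline{dim}_θ E`. -/
def IsUpperInterDim (n : ℕ) (θ : ℝ) (E : Set (Euc n)) (d : ℝ) : Prop :=
  d ∈ Icc (0:ℝ) n ∧ limsup (fun r => Squot n E θ d r) (𝓝[>] 0) = 0

/-- `d` is the lower intermediate dimension profile `\underline{dim}_θ^m E`, i.e. the unique
`s ∈ [0,m]` such that `liminf_{r→0} log C_{r,θ}^{s,m}(E) / (-log r) = s`; for bounded sets the
capacity is that of the closure. -/
def IsLowerDimProfile (n m : ℕ) (θ : ℝ) (E : Set (Euc n)) (d : ℝ) : Prop :=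
  d ∈ Icc (0:ℝ) m ∧ liminf (fun r => Cquot n m d θ (closure E) r) (𝓝[>] 0) = d

/-- `d` is the upper intermediate dimension profile `\overline{dim}_θ^m E`. -/
def IsUpperDimProfile (n m : ℕ) (θ : ℝ) (E : Set (Euc n)) (d : ℝ) : Prop :=
  d ∈ Icc (0:ℝ) m ∧ limsup (fun r => Cquot n m d θ (closure E) r) (𝓝[>] 0) = d

/-- `P` is the matrix of an orthogonal projection of `ℝ^n` onto an `m`-dimensional subspace;
such matrices parametrise the Grassmannian `G(n,m)`. -/
def IsProjMat (n m : ℕ) (P : Matrix (Fin n) (Fin n) ℝ) : Prop :=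
  P.transpose = P ∧ P * P = P ∧ P.rank = m

/-- The orthogonal projection map `π_V` associated to a projection matrix. -/
def projMap (n : ℕ) (P : Matrix (Fin n) (Fin n) ℝ) : Euc n → Euc n :=
  fun x => Matrix.toEuclideanLin P x

/-- `γ` is the natural invariant measure `γ_{n,m}` on the Grassmannian `G(n,m)` (realised as
the space of orthogonal projection matrices of rank `m`): a probability measure supported on
the rank-`m` orthogonal projections and invariant under the action of the orthogonal group. -/
def IsGrassMeasure (n m : ℕ) (γ : Measure (Matrix (Fin n) (Fin n) ℝ)) : Prop :=
  IsProbabilityMeasure γ ∧ γ {P | IsProjMat n m P}ᶜ = 0 ∧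
  ∀ A ∈ Matrix.orthogonalGroup (Fin n) ℝ,
    Measure.map (fun P => A * P * A.transpose) γ = γ
namespace Stmt11Aux

open Real ENNReal

variable {n : ℕ}

lemma rpow_meas {s : ℝ} (hs : 0 ≤ s) : Measurable fun t : ℝ => t ^ s :=
  (continuous_id.rpow_const fun _ => Or.inr hs).measurable

lemma phiK_meas {mR s θ r : ℝ} (hs : 0 ≤ s) (hm : 0 ≤ mR) :
    Measurable (phiK n mR s θ r) := by
  have h1 : Measurable fun x : Euc n => ‖x‖ := measurable_norm
  have h2 : Measurable fun x : Euc n => (r / ‖x‖) ^ s :=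
    (rpow_meas hs).comp (measurable_const.div h1)
  have h3 : Measurable fun x : Euc n => r ^ (θ * (mR - s) + s) / ‖x‖ ^ mR :=
    measurable_const.div ((rpow_meas hm).comp h1)
  unfold phiK
  exact Measurable.ite (measurableSet_lt h1 measurable_const) measurable_const
    (Measurable.ite (measurableSet_lt h1 measurable_const) h2 h3)

section Bounds

variable {mR s θ r : ℝ} (hr0 : 0 < r) (hr1 : r < 1) (hθ0 : 0 < θ) (hθ1 : θ ≤ 1)
  (hs : 0 ≤ s) (hsm : s ≤ mR)

include hr0 hr1 hθ1 in
lemma r_le_rθ : r ≤ r ^ θ := by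
  have := Real.rpow_le_rpow_of_exponent_ge hr0 hr1.le hθ1
  simpa using this

include hr0 in
lemma rθ_pos : 0 < r ^ θ := Real.rpow_pos_of_pos hr0 θ

include hr0 hr1 hθ0 in
lemma rθ_le_one : r ^ θ ≤ 1 := Real.rpow_le_one hr0.le hr1.le hθ0.le

include hr0 hr1 hθ0 hθ1 hs hsm in
lemma phiK_pos (x : Euc n) : 0 < phiK n mR s θ r x := by
  unfold phiK
  split_ifs with h1 h2
  · exact one_pos
  · exact Real.rpow_pos_of_pos (div_pos hr0 (lt_of_lt_of_le hr0 (not_lt.mp h1))) s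
  · exact div_pos (Real.rpow_pos_of_pos hr0 _)
      (Real.rpow_pos_of_pos (lt_of_lt_of_le (rθ_pos hr0) (not_lt.mp h2)) mR)

include hr0 hr1 hθ0 hθ1 hs hsm in
lemma phiK_le_one (x : Euc n) : phiK n mR s θ r x ≤ 1 := by
  unfold phiK
  split_ifs with h1 h2
  · exact le_refl 1
  · have hx : r ≤ ‖x‖ := not_lt.mp h1
    have hx0 : 0 < ‖x‖ := lt_of_lt_of_le hr0 hx
    exact Real.rpow_le_one (div_nonneg hr0.le (norm_nonneg _))
      ((div_le_one hx0).mpr hx) hs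
  · have hx : r ^ θ ≤ ‖x‖ := not_lt.mp h2
    have hx0 : 0 < ‖x‖ := lt_of_lt_of_le (rθ_pos hr0) hx
    have step1 : r ^ (θ * (mR - s) + s) / ‖x‖ ^ mR ≤ r ^ (θ * (mR - s) + s) / (r ^ θ) ^ mR :=
      div_le_div_of_nonneg_left (Real.rpow_nonneg hr0.le _)
        (Real.rpow_pos_of_pos (rθ_pos hr0) mR)
        (Real.rpow_le_rpow (rθ_pos hr0).le hx (hs.trans hsm))
    have step2 : r ^ (θ * (mR - s) + s) / (r ^ θ) ^ mR = r ^ (s * (1 - θ)) := by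
      rw [← Real.rpow_mul hr0.le, ← Real.rpow_sub hr0]
      ring_nf
    have step3 : r ^ (s * (1 - θ)) ≤ 1 :=
      Real.rpow_le_one hr0.le hr1.le (mul_nonneg hs (by linarith))
    calc r ^ (θ * (mR - s) + s) / ‖x‖ ^ mR ≤ r ^ (θ * (mR - s) + s) / (r ^ θ) ^ mR := step1
      _ = r ^ (s * (1 - θ)) := step2
      _ ≤ 1 := step3

include hr0 hr1 hθ0 hθ1 hs hsm in
lemma phiK_ge {d : ℝ} (hd1 : r ≤ d) (hd2 : d ≤ r ^ θ) {x : Euc n} (hx : ‖x‖ ≤ d) :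
    (r / d) ^ s ≤ phiK n mR s θ r x := by
  have hd0 : 0 < d := lt_of_lt_of_le hr0 hd1
  unfold phiK
  split_ifs with h1 h2
  · exact Real.rpow_le_one (div_nonneg hr0.le hd0.le) ((div_le_one hd0).mpr hd1) hs
  · have hx1 : r ≤ ‖x‖ := not_lt.mp h1
    have hx0 : 0 < ‖x‖ := lt_of_lt_of_le hr0 hx1
    exact Real.rpow_le_rpow (div_nonneg hr0.le hd0.le)
      (div_le_div_of_nonneg_left hr0.le hx0 hx) hs
  · have hx1 : r ^ θ ≤ ‖x‖ := not_lt.mp h2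
    have hxe : ‖x‖ = r ^ θ := le_antisymm (hx.trans hd2) hx1
    have hde : d = r ^ θ := le_antisymm hd2 (hx1.trans hx)
    rw [hxe, hde]
    have e1 : r / r ^ θ = r ^ (1 - θ) := by
      rw [Real.rpow_sub hr0, Real.rpow_one]
    have e2 : (r ^ (1 - θ) : ℝ) ^ s = r ^ ((1 - θ) * s) := (Real.rpow_mul hr0.le _ _).symm
    have e3 : ((r ^ θ : ℝ)) ^ mR = r ^ (θ * mR) := (Real.rpow_mul hr0.le _ _).symm
    rw [e1, e2, e3, ← Real.rpow_sub hr0,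
      show θ * (mR - s) + s - θ * mR = (1 - θ) * s by ring]

include hr0 hr1 hθ0 hθ1 hs hsm in
lemma phiK_ge_const (hm : 0 ≤ mR) {D : ℝ} {x : Euc n} (hx : ‖x‖ ≤ D) :
    min (r ^ s) (r ^ (θ * (mR - s) + s) / (max D 1) ^ mR) ≤ phiK n mR s θ r x := by
  unfold phiK
  split_ifs with h1 h2
  · exact le_trans (min_le_left _ _) (Real.rpow_le_one hr0.le hr1.le hs)
  · have hx1 : r ≤ ‖x‖ := not_lt.mp h1
    have hx0 : 0 < ‖x‖ := lt_of_lt_of_le hr0 hx1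
    have hxle1 : ‖x‖ ≤ 1 := (le_of_lt h2).trans (rθ_le_one hr0 hr1 hθ0)
    refine le_trans (min_le_left _ _) (Real.rpow_le_rpow hr0.le ?_ hs)
    calc r = r / 1 := (div_one r).symm
      _ ≤ r / ‖x‖ := div_le_div_of_nonneg_left hr0.le hx0 hxle1
  · have hx1 : r ^ θ ≤ ‖x‖ := not_lt.mp h2
    have hx0 : 0 < ‖x‖ := lt_of_lt_of_le (rθ_pos hr0) hx1
    refine le_trans (min_le_right _ _)
      (div_le_div_of_nonneg_left (Real.rpow_nonneg hr0.le _)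
        (Real.rpow_pos_of_pos hx0 mR)
        (Real.rpow_le_rpow (norm_nonneg _) (hx.trans (le_max_left D 1)) hm))

include hr0 hr1 hθ0 hθ1 hs hsm in
lemma phiK_anti {nR : ℝ} (hmn : mR ≤ nR) (x : Euc n) :
    phiK n nR s θ r x ≤ phiK n mR s θ r x := by
  unfold phiK
  split_ifs with h1 h2
  · exact le_refl _
  · exact le_refl _
  · have hx1 : r ^ θ ≤ ‖x‖ := not_lt.mp h2
    have hx0 : 0 < ‖x‖ := lt_of_lt_of_le (rθ_pos hr0) hx1
    rw [div_le_div_iff₀ (Real.rpow_pos_of_pos hx0 _) (Real.rpow_pos_of_pos hx0 _)]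
    have hnm : (0:ℝ) ≤ nR - mR := sub_nonneg.mpr hmn
    calc r ^ (θ * (nR - s) + s) * ‖x‖ ^ mR
        = r ^ (θ * (mR - s) + s) * r ^ (θ * (nR - mR)) * ‖x‖ ^ mR := by
          rw [← Real.rpow_add hr0, show θ * (mR - s) + s + θ * (nR - mR) = θ * (nR - s) + s by ring]
      _ ≤ r ^ (θ * (mR - s) + s) * ‖x‖ ^ (nR - mR) * ‖x‖ ^ mR := by
          have : r ^ (θ * (nR - mR)) ≤ ‖x‖ ^ (nR - mR) := by
            rw [Real.rpow_mul hr0.le]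
            exact Real.rpow_le_rpow (rθ_pos hr0).le hx1 hnm
          gcongr
      _ = r ^ (θ * (mR - s) + s) * ‖x‖ ^ nR := by
          rw [mul_assoc, ← Real.rpow_add hx0, sub_add_cancel]

end Bounds

/-- The `ℝ≥0∞`-valued double energy. -/
def len (n : ℕ) (φ : Euc n → ℝ) (μ : Measure (Euc n)) : ℝ≥0∞ :=
  ∫⁻ x, ∫⁻ y, ENNReal.ofReal (φ (x - y)) ∂μ ∂μ

lemma len_le_one {φ : Euc n → ℝ} (hφ : ∀ x, φ x ≤ 1) (μ : Measure (Euc n))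
    [IsProbabilityMeasure μ] : len n φ μ ≤ 1 := by
  have hin : ∀ x : Euc n, (∫⁻ y, ENNReal.ofReal (φ (x - y)) ∂μ) ≤ 1 := by
    intro x
    calc (∫⁻ y, ENNReal.ofReal (φ (x - y)) ∂μ)
        ≤ ∫⁻ _, 1 ∂μ := lintegral_mono fun y => ENNReal.ofReal_le_one.mpr (hφ _)
      _ = 1 := by simp
  calc len n φ μ ≤ ∫⁻ _, 1 ∂μ := lintegral_mono hin
    _ = 1 := by simp

lemma energy_eq_len {φ : Euc n → ℝ} (hφm : Measurable φ) (hφ0 : ∀ x, 0 ≤ φ x)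
    (hφ1 : ∀ x, φ x ≤ 1) (μ : Measure (Euc n)) [IsProbabilityMeasure μ] :
    energy n φ μ = (len n φ μ).toReal := by
  have hsub : ∀ x : Euc n, Measurable fun y => φ (x - y) := fun x =>
    hφm.comp (measurable_const.sub measurable_id)
  have inner_eq : ∀ x : Euc n,
      ∫ y, φ (x - y) ∂μ = (∫⁻ y, ENNReal.ofReal (φ (x - y)) ∂μ).toReal := fun x =>
    integral_eq_lintegral_of_nonneg_ae (Filter.Eventually.of_forall fun y => hφ0 _)
      (hsub x).aestronglyMeasurable
  have hL : Measurable fun x : Euc n => ∫⁻ y, ENNReal.ofReal (φ (x - y)) ∂μ := by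
    apply Measurable.lintegral_prod_right' (f := fun p : Euc n × Euc n => ENNReal.ofReal (φ (p.1 - p.2)))
    exact (hφm.comp (measurable_fst.sub measurable_snd)).ennreal_ofReal
  have hLle : ∀ x : Euc n, (∫⁻ y, ENNReal.ofReal (φ (x - y)) ∂μ) ≤ 1 := by
    intro x
    calc (∫⁻ y, ENNReal.ofReal (φ (x - y)) ∂μ)
        ≤ ∫⁻ _, 1 ∂μ := lintegral_mono fun y => ENNReal.ofReal_le_one.mpr (hφ1 _)
      _ = 1 := by simp
  have : energy n φ μ = ∫ x, (∫⁻ y, ENNReal.ofReal (φ (x - y)) ∂μ).toReal ∂μ := by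
    unfold energy
    exact integral_congr_ae (Filter.Eventually.of_forall fun x => inner_eq x)
  rw [this, integral_eq_lintegral_of_nonneg_ae
    (Filter.Eventually.of_forall fun x => ENNReal.toReal_nonneg)
    (ENNReal.measurable_toReal.comp hL).aestronglyMeasurable]
  unfold len
  congr 1
  apply lintegral_congr
  intro x
  exact ENNReal.ofReal_toReal (ne_top_of_le_ne_top ENNReal.one_ne_top (hLle x))

lemma ae_mem_of_pmeason {E : Set (Euc n)} {μ : Measure (Euc n)} (hμ : PMeasOn n E μ) :
    ∀ᵐ x ∂μ, x ∈ E := by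
  rw [ae_iff]
  exact hμ.2

lemma len_ge_const {E : Set (Euc n)} (hEb : Bornology.IsBounded E) {μ : Measure (Euc n)}
    (hμ : PMeasOn n E μ) {φ : Euc n → ℝ} {c : ℝ}
    (hφc : ∀ x : Euc n, ‖x‖ ≤ diam E → c ≤ φ x) :
    ENNReal.ofReal c ≤ len n φ μ := by
  haveI := hμ.1
  have haeE : ∀ᵐ x ∂μ, x ∈ E := ae_mem_of_pmeason hμ
  have key : ∀ x ∈ E, ENNReal.ofReal c ≤ ∫⁻ y, ENNReal.ofReal (φ (x - y)) ∂μ := by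
    intro x hx
    have h1 : ∀ᵐ y ∂μ, ENNReal.ofReal c ≤ ENNReal.ofReal (φ (x - y)) := by
      filter_upwards [haeE] with y hy
      refine ENNReal.ofReal_le_ofReal (hφc _ ?_)
      rw [← dist_eq_norm]
      exact Metric.dist_le_diam_of_mem hEb hx hy
    calc ENNReal.ofReal c = ∫⁻ _, ENNReal.ofReal c ∂μ := by simp
      _ ≤ _ := lintegral_mono_ae h1
  calc ENNReal.ofReal c = ∫⁻ _, ENNReal.ofReal c ∂μ := by simp
    _ ≤ len n φ μ := lintegral_mono_ae (by filter_upwards [haeE] with x hx; exact key x hx)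

lemma enn_amgm (a b t : ℝ≥0∞) (hb0 : b ≠ 0) (hbt : b ≠ ⊤) :
    2 * t * a ≤ a * a / b + t * t * b := by
  rcases eq_or_ne a ⊤ with ha | ha
  · subst ha
    have : (⊤ : ℝ≥0∞) * ⊤ / b = ⊤ := by
      rw [ENNReal.top_mul ENNReal.top_ne_zero, ENNReal.top_div]
      simp [hbt]
    rw [this]
    exact le_top.trans_eq (top_add _).symm
  rcases eq_or_ne t ⊤ with ht | ht
  · subst ht
    have : (⊤ : ℝ≥0∞) * ⊤ * b = ⊤ := by
      rw [ENNReal.top_mul ENNReal.top_ne_zero, ENNReal.top_mul hb0]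
    rw [this]
    simp
  lift a to ℝ≥0 using ha
  lift b to ℝ≥0 using hbt
  lift t to ℝ≥0 using ht
  have hb0' : b ≠ 0 := by simpa using hb0
  rw [← ENNReal.coe_ofNat, ← ENNReal.coe_mul, ← ENNReal.coe_mul, ← ENNReal.coe_mul,
    ← ENNReal.coe_mul, ← ENNReal.coe_mul, ← ENNReal.coe_div hb0', ← ENNReal.coe_add,
    ENNReal.coe_le_coe, ← NNReal.coe_le_coe]
  push_cast
  have hbp : (0:ℝ) < b := lt_of_le_of_ne b.coe_nonneg (by exact_mod_cast hb0'.symm)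
  have hkey : (a:ℝ) * a / b + t * t * b - 2 * t * a = (a - t * b) ^ 2 / b := by
    field_simp
    ring
  nlinarith [div_nonneg (sq_nonneg ((a:ℝ) - t * b)) hbp.le]

lemma diam_closedBall_euc (hn : 0 < n) (x : Euc n) {ρ : ℝ} (hρ : 0 ≤ ρ) :
    diam (closedBall x ρ) = 2 * ρ := by
  refine le_antisymm (diam_closedBall hρ) ?_
  set v : Euc n := EuclideanSpace.single ⟨0, hn⟩ ρ with hv
  have hnv : ‖v‖ = ρ := by
    rw [hv, EuclideanSpace.norm_single, Real.norm_eq_abs, abs_of_nonneg hρ]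
  have h1 : x + v ∈ closedBall x ρ := by
    rw [mem_closedBall, dist_eq_norm]
    simp [hnv]
  have h2 : x - v ∈ closedBall x ρ := by
    rw [mem_closedBall, dist_eq_norm]
    simp [hnv]
  have h3 := Metric.dist_le_diam_of_mem (Metric.isBounded_closedBall) h1 h2
  have h4 : dist (x + v) (x - v) = 2 * ρ := by
    rw [dist_eq_norm, show x + v - (x - v) = (2:ℝ) • v by module, norm_smul]
    simp [hnv]
  linarith [h3, h4]

lemma coverSum_ne_top (hn : 0 < n) {E : Set (Euc n)} (hE : IsCompact E)
    {θ s r : ℝ} (hr0 : 0 < r) (hr1 : r < 1) (hθ1 : θ ≤ 1) :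
    coverSum n E θ s r ≠ ⊤ := by
  obtain ⟨t, htfin, hsub⟩ := (Metric.totallyBounded_iff.mp hE.totallyBounded) (r / 2)
    (by positivity)
  set 𝒰 : Set (Set (Euc n)) := (fun y => closedBall y (r / 2)) '' t with h𝒰
  have hdiam : ∀ U ∈ 𝒰, diam U = r := by
    rintro U ⟨y, _, rfl⟩
    rw [diam_closedBall_euc hn y (by positivity)]
    ring
  have hmem : (∑' U : 𝒰, ENNReal.ofReal (diam (U : Set (Euc n)) ^ s)) ∈
      { T : ℝ≥0∞ | ∃ 𝒰 : Set (Set (Euc n)), 𝒰.Countable ∧ E ⊆ ⋃₀ 𝒰 ∧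
        (∀ U ∈ 𝒰, r ≤ diam U ∧ diam U ≤ r ^ θ) ∧
        T = ∑' U : 𝒰, ENNReal.ofReal (diam (U : Set (Euc n)) ^ s) } := by
    refine ⟨𝒰, (htfin.image _).countable, ?_, ?_, rfl⟩
    · intro x hx
      obtain ⟨y, hy⟩ := by simpa using hsub hx
      exact ⟨closedBall y (r / 2), ⟨y, hy.1, rfl⟩, Metric.ball_subset_closedBall hy.2⟩
    · intro U hU
      rw [hdiam U hU]
      exact ⟨le_refl r, r_le_rθ hr0 hr1 hθ1⟩
  have hfin : (∑' U : 𝒰, ENNReal.ofReal (diam (U : Set (Euc n)) ^ s)) ≠ ⊤ := by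
    haveI : Fintype ↥𝒰 := (htfin.image _).fintype
    rw [tsum_fintype]
    exact (ENNReal.sum_lt_top.mpr (fun U _ => ENNReal.ofReal_lt_top)).ne
  intro h
  have h2 : (⊤:ℝ≥0∞) ≤ ∑' U : 𝒰, ENNReal.ofReal (diam (U : Set (Euc n)) ^ s) := by
    rw [← h]
    exact sInf_le hmem
  exact hfin (top_le_iff.mp h2)

lemma key_cover {E : Set (Euc n)} (hEne : E.Nonempty) (hEb : Bornology.IsBounded E)
    {μ : Measure (Euc n)} (hμ : PMeasOn n E μ)
    {mR s θ r : ℝ} (hr0 : 0 < r) (hr1 : r < 1) (hθ0 : 0 < θ) (hθ1 : θ ≤ 1)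
    (hs : 0 ≤ s) (hsm : s ≤ mR)
    {𝒰 : Set (Set (Euc n))} (hc : 𝒰.Countable) (hcov : E ⊆ ⋃₀ 𝒰)
    (hdiam : ∀ U ∈ 𝒰, r ≤ diam U ∧ diam U ≤ r ^ θ) :
    ENNReal.ofReal (r ^ s) ≤ len n (phiK n mR s θ r) μ *
      ∑' U : 𝒰, ENNReal.ofReal (diam (U : Set (Euc n)) ^ s) := by
  classical
  haveI := hμ.1
  haveI : Countable ↥𝒰 := hc.to_subtype
  set φ : Euc n → ℝ := phiK n mR s θ r with hφ
  set T : ℝ≥0∞ := ∑' U : 𝒰, ENNReal.ofReal (diam (U : Set (Euc n)) ^ s) with hT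
  obtain ⟨x₀, hx₀⟩ := hEne
  obtain ⟨W₀, hW₀, hx₀W⟩ := hcov hx₀
  have hlen_pos : 0 < len n φ μ := by
    have hc0 : (0:ℝ) < min (r ^ s) (r ^ (θ * (mR - s) + s) / (max (diam E) 1) ^ mR) := by
      refine lt_min (Real.rpow_pos_of_pos hr0 s) (div_pos (Real.rpow_pos_of_pos hr0 _) ?_)
      exact Real.rpow_pos_of_pos (lt_of_lt_of_le one_pos (le_max_right _ _)) mR
    refine lt_of_lt_of_le (ENNReal.ofReal_pos.mpr hc0) ?_
    exact len_ge_const hEb hμ (fun x hx =>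
      phiK_ge_const hr0 hr1 hθ0 hθ1 hs hsm (hs.trans hsm) hx)
  by_cases hTtop : T = ⊤
  · rw [hTtop, ENNReal.mul_top hlen_pos.ne']
    exact le_top
  -- enumerate
  obtain ⟨e, he⟩ := Countable.exists_injective_nat ↥𝒰
  set V : ↥𝒰 → Set (Euc n) :=
    fun U => closure U.1 \ ⋃ (U' : ↥𝒰) (_ : e U' < e U), closure U'.1 with hV
  have hVmeas : ∀ U, MeasurableSet (V U) := fun U =>
    isClosed_closure.measurableSet.diff
      (MeasurableSet.iUnion fun U' => MeasurableSet.iUnion fun _ =>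
        isClosed_closure.measurableSet)
  have hVsub : ∀ U, V U ⊆ closure U.1 := fun U => diff_subset
  have hVdisj : ∀ U U' : ↥𝒰, U ≠ U' → ∀ x, x ∈ V U → x ∈ V U' → False := by
    intro U U' hne x hxU hxU'
    rcases lt_or_gt_of_ne (fun h : e U = e U' => hne (he h)) with h | h
    · exact hxU'.2 (mem_iUnion.mpr ⟨U, mem_iUnion.mpr ⟨h, hxU.1⟩⟩)
    · exact hxU.2 (mem_iUnion.mpr ⟨U', mem_iUnion.mpr ⟨h, hxU'.1⟩⟩)
  have hcovV : E ⊆ ⋃ U : ↥𝒰, V U := by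
    intro x hx
    obtain ⟨W, hW, hxW⟩ := hcov hx
    set P : ℕ → Prop := fun k => ∃ U : ↥𝒰, e U = k ∧ x ∈ closure U.1 with hP
    have hPex : ∃ k, P k := ⟨e ⟨W, hW⟩, ⟨W, hW⟩, rfl, subset_closure hxW⟩
    obtain ⟨U, hUe, hUx⟩ := Nat.find_spec hPex
    refine mem_iUnion.mpr ⟨U, hUx, ?_⟩
    intro hmem
    obtain ⟨U', hU'⟩ := mem_iUnion.mp hmem
    obtain ⟨hlt, hx'⟩ := mem_iUnion.mp hU'
    have hle : Nat.find hPex ≤ e U' := Nat.find_le ⟨U', rfl, hx'⟩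
    omega
  set a : ↥𝒰 → ℝ≥0∞ := fun U => μ (V U) with ha
  set b : ↥𝒰 → ℝ≥0∞ := fun U => ENNReal.ofReal (diam U.1 ^ s) with hb
  have hb_lb : ∀ U : ↥𝒰, ENNReal.ofReal (r ^ s) ≤ b U := fun U =>
    ENNReal.ofReal_le_ofReal (Real.rpow_le_rpow hr0.le (hdiam U.1 U.2).1 hs)
  have hrs_pos : (0:ℝ≥0∞) < ENNReal.ofReal (r ^ s) :=
    ENNReal.ofReal_pos.mpr (Real.rpow_pos_of_pos hr0 s)
  have hb0 : ∀ U, b U ≠ 0 := fun U => (lt_of_lt_of_le hrs_pos (hb_lb U)).ne'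
  have hbt : ∀ U, b U ≠ ⊤ := fun U => ENNReal.ofReal_ne_top
  have hT0 : T ≠ 0 := by
    have := le_trans (hb_lb ⟨W₀, hW₀⟩) (ENNReal.le_tsum (f := b) ⟨W₀, hW₀⟩)
    exact (lt_of_lt_of_le hrs_pos this).ne'
  have hsum_a : 1 ≤ ∑' U : ↥𝒰, a U := by
    have h1 : (1:ℝ≥0∞) = μ univ := (measure_univ).symm
    calc (1:ℝ≥0∞) = μ univ := h1
      _ ≤ μ ((⋃ U : ↥𝒰, V U) ∪ Eᶜ) := measure_mono (fun x _ => by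
          by_cases hx : x ∈ E
          · exact Or.inl (hcovV hx)
          · exact Or.inr hx)
      _ ≤ μ (⋃ U : ↥𝒰, V U) + μ Eᶜ := measure_union_le _ _
      _ = μ (⋃ U : ↥𝒰, V U) := by rw [hμ.2, add_zero]
      _ ≤ ∑' U : ↥𝒰, a U := measure_iUnion_le _
  -- potential bound
  have hpot : ∀ U : ↥𝒰, ∀ x ∈ V U,
      ENNReal.ofReal (r ^ s) / b U * a U ≤ ∫⁻ y, ENNReal.ofReal (φ (x - y)) ∂μ := by
    intro U x hxV
    have hUb : Bornology.IsBounded U.1 := by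
      by_contra hub
      have h0 := Metric.diam_eq_zero_of_unbounded hub
      have := (hdiam U.1 U.2).1
      rw [h0] at this
      linarith
    have hd1 : r ≤ diam U.1 := (hdiam U.1 U.2).1
    have hd2 : diam U.1 ≤ r ^ θ := (hdiam U.1 U.2).2
    have hdpos : 0 < diam U.1 := lt_of_lt_of_le hr0 hd1
    have hphi : ∀ y ∈ V U, ENNReal.ofReal (r ^ s) / b U ≤ ENNReal.ofReal (φ (x - y)) := by
      intro y hyV
      have hdist : ‖x - y‖ ≤ diam U.1 := by
        rw [← dist_eq_norm]
        calc dist x y ≤ diam (closure U.1) :=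
              Metric.dist_le_diam_of_mem hUb.closure (hVsub U hxV) (hVsub U hyV)
          _ = diam U.1 := Metric.diam_closure _
      have hphi1 : (r / diam U.1) ^ s ≤ φ (x - y) :=
        phiK_ge hr0 hr1 hθ0 hθ1 hs hsm hd1 hd2 hdist
      have heq : ENNReal.ofReal (r ^ s) / b U = ENNReal.ofReal ((r / diam U.1) ^ s) := by
        rw [Real.div_rpow hr0.le hdpos.le, ENNReal.ofReal_div_of_pos
          (Real.rpow_pos_of_pos hdpos s)]
      rw [heq]
      exact ENNReal.ofReal_le_ofReal hphi1
    calc ENNReal.ofReal (r ^ s) / b U * a U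
        = ∫⁻ _ in V U, ENNReal.ofReal (r ^ s) / b U ∂μ := (setLIntegral_const _ _).symm
      _ ≤ ∫⁻ y in V U, ENNReal.ofReal (φ (x - y)) ∂μ :=
          setLIntegral_mono' (hVmeas U) (fun y hy => hphi y hy)
      _ ≤ ∫⁻ y, ENNReal.ofReal (φ (x - y)) ∂μ := setLIntegral_le_lintegral _ _
  -- main sum bound
  set Q : ℝ≥0∞ := ∑' U : ↥𝒰, a U * a U / b U with hQ
  have hmain : ENNReal.ofReal (r ^ s) * Q ≤ len n φ μ := by
    have hterm : ∀ U : ↥𝒰, ENNReal.ofReal (r ^ s) * (a U * a U / b U) =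
        ∫⁻ x, (V U).indicator (fun _ => ENNReal.ofReal (r ^ s) / b U * a U) x ∂μ := by
      intro U
      rw [lintegral_indicator (hVmeas U), setLIntegral_const]
      rw [div_eq_mul_inv, div_eq_mul_inv]
      ring
    calc ENNReal.ofReal (r ^ s) * Q
        = ∑' U : ↥𝒰, ENNReal.ofReal (r ^ s) * (a U * a U / b U) := (ENNReal.tsum_mul_left).symm
      _ = ∑' U : ↥𝒰, ∫⁻ x, (V U).indicator
            (fun _ => ENNReal.ofReal (r ^ s) / b U * a U) x ∂μ := tsum_congr hterm
      _ = ∫⁻ x, ∑' U : ↥𝒰, (V U).indicator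
            (fun _ => ENNReal.ofReal (r ^ s) / b U * a U) x ∂μ :=
          (lintegral_tsum (fun U => (measurable_const.indicator (hVmeas U)).aemeasurable)).symm
      _ ≤ ∫⁻ x, ∫⁻ y, ENNReal.ofReal (φ (x - y)) ∂μ ∂μ := by
          refine lintegral_mono fun x => ?_
          by_cases hx : ∃ U : ↥𝒰, x ∈ V U
          · obtain ⟨U₀, hU₀⟩ := hx
            rw [tsum_eq_single U₀ (fun U hne => indicator_of_notMem
              (fun hxU => hVdisj U U₀ hne x hxU hU₀) _)]
            rw [indicator_of_mem hU₀]
            exact hpot U₀ x hU₀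
          · push_neg at hx
            have : ∀ U : ↥𝒰, (V U).indicator
                (fun _ => ENNReal.ofReal (r ^ s) / b U * a U) x = 0 := fun U =>
              indicator_of_notMem (hx U) _
            simp only [this, tsum_zero]
            exact zero_le
      _ = len n φ μ := rfl
  -- AM-GM
  have hamgm : ∀ U : ↥𝒰, 2 * T⁻¹ * a U ≤ a U * a U / b U + T⁻¹ * T⁻¹ * b U := fun U =>
    enn_amgm (a U) (b U) T⁻¹ (hb0 U) (hbt U)
  have hsum : 2 * T⁻¹ ≤ Q + T⁻¹ := by
    have h1 : ∑' U : ↥𝒰, 2 * T⁻¹ * a U ≤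
        ∑' U : ↥𝒰, (a U * a U / b U + T⁻¹ * T⁻¹ * b U) := ENNReal.tsum_le_tsum hamgm
    rw [ENNReal.tsum_add, ENNReal.tsum_mul_left, ENNReal.tsum_mul_left, ← hT] at h1
    have h2 : T⁻¹ * T⁻¹ * T = T⁻¹ := by
      rw [mul_assoc, ENNReal.inv_mul_cancel hT0 hTtop, mul_one]
    rw [h2] at h1
    calc 2 * T⁻¹ = 2 * T⁻¹ * 1 := (mul_one _).symm
      _ ≤ 2 * T⁻¹ * ∑' U : ↥𝒰, a U := mul_le_mul_right hsum_a _
      _ ≤ Q + T⁻¹ := h1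
  have hQ_lb : T⁻¹ ≤ Q := by
    have htne : T⁻¹ ≠ ⊤ := ENNReal.inv_ne_top.mpr hT0
    have : T⁻¹ + T⁻¹ ≤ Q + T⁻¹ := by
      calc T⁻¹ + T⁻¹ = 2 * T⁻¹ := (two_mul _).symm
        _ ≤ Q + T⁻¹ := hsum
    exact (ENNReal.add_le_add_iff_right htne).mp this
  calc ENNReal.ofReal (r ^ s) = ENNReal.ofReal (r ^ s) * T⁻¹ * T := by
        rw [mul_assoc, ENNReal.inv_mul_cancel hT0 hTtop, mul_one]
    _ ≤ ENNReal.ofReal (r ^ s) * Q * T :=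
        mul_le_mul_left (mul_le_mul_right hQ_lb _) _
    _ ≤ len n φ μ * T := mul_le_mul_left hmain _

end Stmt11Aux


/-- `C_{r,θ}^{s,m}(E) ≤ C_{r,θ}^{s,n}(E)` for `m ≤ n`, and consequently
`r^s C_{r,θ}^{s,m}(E) ≤ S_{r,θ}^s(E)`. -/
theorem statement11 (n m : ℕ) (hm1 : 1 ≤ m) (hmn : m ≤ n)
    (E : Set (Euc n)) (hE : IsCompact E) (hEne : E.Nonempty)
    (θ : ℝ) (hθ : θ ∈ Ioc (0:ℝ) 1) (r : ℝ) (hr : r ∈ Ioo (0:ℝ) 1)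
    (s : ℝ) (hs0 : 0 ≤ s) (hsm : s ≤ m) :
    capacity n m s θ r E ≤ capacity n n s θ r E ∧
    r ^ s * capacity n m s θ r E ≤ Sval n E θ s r := by
  classical
  obtain ⟨hr0, hr1⟩ := hr
  obtain ⟨hθ0, hθ1⟩ := hθ
  have hn0 : 0 < n := lt_of_lt_of_le hm1 hmn
  have hmn' : (m:ℝ) ≤ (n:ℝ) := by exact_mod_cast hmn
  have hsn : s ≤ (n:ℝ) := hsm.trans hmn'
  have hm0 : (0:ℝ) ≤ (m:ℝ) := by positivity
  have hn0' : (0:ℝ) ≤ (n:ℝ) := by positivity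
  have hEb : Bornology.IsBounded E := hE.isBounded
  set Am : Set ℝ := {e | ∃ μ : Measure (Euc n), PMeasOn n E μ ∧
    e = energy n (phiK n (↑m) s θ r) μ} with hAm
  set An : Set ℝ := {e | ∃ μ : Measure (Euc n), PMeasOn n E μ ∧
    e = energy n (phiK n (↑n) s θ r) μ} with hAn
  have hcapm : capacity n (↑m) s θ r E = (sInf Am)⁻¹ := rfl
  have hcapn : capacity n (↑n) s θ r E = (sInf An)⁻¹ := rfl
  have hφm_meas : Measurable (phiK n (↑m) s θ r) := Stmt11Aux.phiK_meas hs0 hm0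
  have hφn_meas : Measurable (phiK n (↑n) s θ r) := Stmt11Aux.phiK_meas hs0 hn0'
  have hφm_pos : ∀ x : Euc n, 0 < phiK n (↑m) s θ r x :=
    Stmt11Aux.phiK_pos hr0 hr1 hθ0 hθ1 hs0 hsm
  have hφm_le1 : ∀ x, phiK n (↑m) s θ r x ≤ 1 :=
    Stmt11Aux.phiK_le_one hr0 hr1 hθ0 hθ1 hs0 hsm
  have hφn_pos : ∀ x : Euc n, 0 < phiK n (↑n) s θ r x :=
    Stmt11Aux.phiK_pos hr0 hr1 hθ0 hθ1 hs0 hsn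
  have hφn_le1 : ∀ x, phiK n (↑n) s θ r x ≤ 1 :=
    Stmt11Aux.phiK_le_one hr0 hr1 hθ0 hθ1 hs0 hsn
  set c0m : ℝ := min (r ^ s) (r ^ (θ * ((m:ℝ) - s) + s) / (max (diam E) 1) ^ (m:ℝ))
    with hc0m
  set c0n : ℝ := min (r ^ s) (r ^ (θ * ((n:ℝ) - s) + s) / (max (diam E) 1) ^ (n:ℝ))
    with hc0n
  have hmax_pos : (0:ℝ) < max (diam E) 1 := lt_of_lt_of_le one_pos (le_max_right _ _)
  have hc0m_pos : 0 < c0m := lt_min (Real.rpow_pos_of_pos hr0 s)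
    (div_pos (Real.rpow_pos_of_pos hr0 _) (Real.rpow_pos_of_pos hmax_pos _))
  have hc0n_pos : 0 < c0n := lt_min (Real.rpow_pos_of_pos hr0 s)
    (div_pos (Real.rpow_pos_of_pos hr0 _) (Real.rpow_pos_of_pos hmax_pos _))
  have hAm_facts : ∀ e ∈ Am, c0m ≤ e ∧ e ≤ 1 := by
    rintro e ⟨μ, hμ, rfl⟩
    haveI := hμ.1
    have hlen1 : Stmt11Aux.len n (phiK n (↑m) s θ r) μ ≤ 1 :=
      Stmt11Aux.len_le_one hφm_le1 μ
    have heq : energy n (phiK n (↑m) s θ r) μ =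
        (Stmt11Aux.len n (phiK n (↑m) s θ r) μ).toReal :=
      Stmt11Aux.energy_eq_len hφm_meas (fun x => (hφm_pos x).le) hφm_le1 μ
    have hge : ENNReal.ofReal c0m ≤ Stmt11Aux.len n (phiK n (↑m) s θ r) μ :=
      Stmt11Aux.len_ge_const hEb hμ (fun x hx =>
        Stmt11Aux.phiK_ge_const hr0 hr1 hθ0 hθ1 hs0 hsm hm0 hx)
    constructor
    · rw [heq]
      calc c0m = (ENNReal.ofReal c0m).toReal := by rw [ENNReal.toReal_ofReal hc0m_pos.le]
        _ ≤ _ := ENNReal.toReal_mono (ne_top_of_le_ne_top ENNReal.one_ne_top hlen1) hge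
    · rw [heq]
      calc (Stmt11Aux.len n (phiK n (↑m) s θ r) μ).toReal
          ≤ (1:ℝ≥0∞).toReal := ENNReal.toReal_mono ENNReal.one_ne_top hlen1
        _ = 1 := by simp
  have hAn_facts : ∀ e ∈ An, c0n ≤ e ∧ e ≤ 1 := by
    rintro e ⟨μ, hμ, rfl⟩
    haveI := hμ.1
    have hlen1 : Stmt11Aux.len n (phiK n (↑n) s θ r) μ ≤ 1 :=
      Stmt11Aux.len_le_one hφn_le1 μ
    have heq : energy n (phiK n (↑n) s θ r) μ =
        (Stmt11Aux.len n (phiK n (↑n) s θ r) μ).toReal :=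
      Stmt11Aux.energy_eq_len hφn_meas (fun x => (hφn_pos x).le) hφn_le1 μ
    have hge : ENNReal.ofReal c0n ≤ Stmt11Aux.len n (phiK n (↑n) s θ r) μ :=
      Stmt11Aux.len_ge_const hEb hμ (fun x hx =>
        Stmt11Aux.phiK_ge_const hr0 hr1 hθ0 hθ1 hs0 hsn hn0' hx)
    constructor
    · rw [heq]
      calc c0n = (ENNReal.ofReal c0n).toReal := by rw [ENNReal.toReal_ofReal hc0n_pos.le]
        _ ≤ _ := ENNReal.toReal_mono (ne_top_of_le_ne_top ENNReal.one_ne_top hlen1) hge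
    · rw [heq]
      calc (Stmt11Aux.len n (phiK n (↑n) s θ r) μ).toReal
          ≤ (1:ℝ≥0∞).toReal := ENNReal.toReal_mono ENNReal.one_ne_top hlen1
        _ = 1 := by simp
  obtain ⟨x₀, hx₀⟩ := hEne
  have hdirac : PMeasOn n E (Measure.dirac x₀) := by
    refine ⟨inferInstance, ?_⟩
    rw [Measure.dirac_apply' _ hE.isClosed.measurableSet.compl]
    simp [hx₀]
  have hAm_ne : Am.Nonempty := ⟨_, ⟨Measure.dirac x₀, hdirac, rfl⟩⟩
  have hAn_ne : An.Nonempty := ⟨_, ⟨Measure.dirac x₀, hdirac, rfl⟩⟩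
  have hAn_bdd : BddBelow An := ⟨c0n, fun e he => (hAn_facts e he).1⟩
  have h_inf_le : sInf An ≤ sInf Am := by
    apply le_csInf hAm_ne
    rintro e ⟨μ, hμ, rfl⟩
    haveI := hμ.1
    have hle : energy n (phiK n (↑n) s θ r) μ ≤ energy n (phiK n (↑m) s θ r) μ := by
      rw [Stmt11Aux.energy_eq_len hφn_meas (fun x => (hφn_pos x).le) hφn_le1 μ,
        Stmt11Aux.energy_eq_len hφm_meas (fun x => (hφm_pos x).le) hφm_le1 μ]
      refine ENNReal.toReal_mono
        (ne_top_of_le_ne_top ENNReal.one_ne_top (Stmt11Aux.len_le_one hφm_le1 μ)) ?_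
      refine lintegral_mono fun x => lintegral_mono fun y => ?_
      exact ENNReal.ofReal_le_ofReal
        (Stmt11Aux.phiK_anti hr0 hr1 hθ0 hθ1 hs0 hsm hmn' _)
    exact le_trans (csInf_le hAn_bdd ⟨μ, hμ, rfl⟩) hle
  have hinf_n_pos : 0 < sInf An :=
    lt_of_lt_of_le hc0n_pos (le_csInf hAn_ne fun e he => (hAn_facts e he).1)
  have hinf_m_pos : 0 < sInf Am := lt_of_lt_of_le hinf_n_pos h_inf_le
  constructor
  · rw [hcapm, hcapn]
    exact inv_anti₀ hinf_n_pos h_inf_le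
  · rw [hcapm]
    have hCS_ne : coverSum n E θ s r ≠ ⊤ := Stmt11Aux.coverSum_ne_top hn0 hE hr0 hr1 hθ1
    have hkey : ∀ e ∈ Am, r ^ s ≤ e * Sval n E θ s r := by
      rintro e ⟨μ, hμ, rfl⟩
      haveI := hμ.1
      set L := Stmt11Aux.len n (phiK n (↑m) s θ r) μ with hL
      have hL1 : L ≤ 1 := Stmt11Aux.len_le_one hφm_le1 μ
      have hLne : L ≠ ⊤ := ne_top_of_le_ne_top ENNReal.one_ne_top hL1
      have heq : energy n (phiK n (↑m) s θ r) μ = L.toReal :=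
        Stmt11Aux.energy_eq_len hφm_meas (fun x => (hφm_pos x).le) hφm_le1 μ
      have hLpos : 0 < L := lt_of_lt_of_le (ENNReal.ofReal_pos.mpr hc0m_pos)
        (Stmt11Aux.len_ge_const hEb hμ (fun x hx =>
          Stmt11Aux.phiK_ge_const hr0 hr1 hθ0 hθ1 hs0 hsm hm0 hx))
      have hdivle : ENNReal.ofReal (r ^ s) / L ≤ coverSum n E θ s r := by
        refine le_sInf ?_
        rintro T ⟨𝒰, hc, hcov, hdiam, rfl⟩
        rw [ENNReal.div_le_iff_le_mul (Or.inl hLpos.ne') (Or.inl hLne)]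
        rw [mul_comm]
        exact Stmt11Aux.key_cover ⟨x₀, hx₀⟩ hEb hμ hr0 hr1 hθ0 hθ1 hs0 hsm hc hcov hdiam
      have hmulle : ENNReal.ofReal (r ^ s) ≤ L * coverSum n E θ s r := by
        calc ENNReal.ofReal (r ^ s) = L * (ENNReal.ofReal (r ^ s) / L) :=
              (ENNReal.mul_div_cancel hLpos.ne' hLne).symm
          _ ≤ L * coverSum n E θ s r := mul_le_mul_right hdivle _
      have hrw : L * coverSum n E θ s r = ENNReal.ofReal (L.toReal * Sval n E θ s r) := by
        rw [ENNReal.ofReal_mul ENNReal.toReal_nonneg, ENNReal.ofReal_toReal hLne]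
        unfold Sval
        rw [ENNReal.ofReal_toReal hCS_ne]
      rw [hrw] at hmulle
      rw [heq]
      exact (ENNReal.ofReal_le_ofReal_iff
        (mul_nonneg ENNReal.toReal_nonneg ENNReal.toReal_nonneg)).mp hmulle
    obtain ⟨e₀, he₀⟩ := id hAm_ne
    have hSnn : 0 ≤ Sval n E θ s r := ENNReal.toReal_nonneg
    have hSpos : 0 < Sval n E θ s r := by
      have h1 := hkey e₀ he₀
      have h2 := (hAm_facts e₀ he₀).2
      have h3 : r ^ s ≤ Sval n E θ s r :=
        le_trans h1 (mul_le_of_le_one_left hSnn h2)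
      exact lt_of_lt_of_le (Real.rpow_pos_of_pos hr0 s) h3
    have hrs_pos : (0:ℝ) < r ^ s := Real.rpow_pos_of_pos hr0 s
    have hinf_lb : r ^ s / Sval n E θ s r ≤ sInf Am :=
      le_csInf hAm_ne (fun e he => (div_le_iff₀ hSpos).mpr (hkey e he))
    have h4 : (sInf Am)⁻¹ ≤ (r ^ s / Sval n E θ s r)⁻¹ :=
      inv_anti₀ (div_pos hrs_pos hSpos) hinf_lb
    calc r ^ s * (sInf Am)⁻¹ ≤ r ^ s * (r ^ s / Sval n E θ s r)⁻¹ :=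
          mul_le_mul_of_nonneg_left h4 hrs_pos.le
      _ = Sval n E θ s r := by
          rw [inv_div, mul_comm, div_mul_cancel₀ _ hrs_pos.ne']
end
end

section
/- Let E ⊂ ℝ^n be bounded and nonempty. If the lower box-counting dimension of E equals n, then \underline{dim}_θ E = \overline{dim}_θ E = n for all θ ∈ (0,1]. Similarly, if the upper box-counting dimension of E equals n, then \overline{dim}_θ E = n for all θ ∈ (0,1]. -/
open MeasureTheory Metric Set Filter Topology
open scoped ENNReal NNReal

noncomputable section

/-- Volume bound for separated finsets. -/
lemma sep_card_bound (n : ℕ) (x : Euc n) {R r : ℝ} (hr : 0 < r) (hR : 0 ≤ R)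
    (S : Finset (Euc n)) (hS : ↑S ⊆ closedBall x R)
    (hsep : (S : Set (Euc n)).Pairwise fun a b => r ≤ dist a b) :
    (S.card : ℝ) ≤ ((2*R + r)/r)^n := by
  have hr2 : (0:ℝ) < r/2 := by linarith
  have hdisj : (S : Set (Euc n)).PairwiseDisjoint fun y => ball y (r/2) := by
    intro a ha b hb hab
    exact ball_disjoint_ball (by linarith [hsep ha hb hab])
  have hmeas : ∀ y ∈ S, MeasurableSet (ball y (r/2)) := fun y _ => measurableSet_ball
  have hsum := measure_biUnion_finset (μ := volume) hdisj hmeas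
  have hsub : (⋃ y ∈ S, ball y (r/2)) ⊆ ball x (R + r/2) := by
    intro z hz
    simp only [mem_iUnion] at hz
    obtain ⟨y, hy, hzy⟩ := hz
    have := hS hy
    rw [mem_closedBall] at this
    rw [mem_ball] at hzy ⊢
    calc dist z x ≤ dist z y + dist y x := dist_triangle _ _ _
    _ < r/2 + R := by linarith
    _ = R + r/2 := by ring
  have hball : ∀ y : Euc n, volume (ball y (r/2)) = ENNReal.ofReal ((r/2)^n) * volume (ball (0:Euc n) 1) := by
    intro y
    rw [Measure.addHaar_ball_of_pos volume y hr2, finrank_euclideanSpace_fin]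
  have hball2 : volume (ball x (R + r/2)) = ENNReal.ofReal ((R + r/2)^n) * volume (ball (0:Euc n) 1) := by
    rw [Measure.addHaar_ball_of_pos volume x (by linarith), finrank_euclideanSpace_fin]
  have hkey : (S.card : ℝ≥0∞) * (ENNReal.ofReal ((r/2)^n) * volume (ball (0:Euc n) 1))
      ≤ ENNReal.ofReal ((R + r/2)^n) * volume (ball (0:Euc n) 1) := by
    calc (S.card : ℝ≥0∞) * (ENNReal.ofReal ((r/2)^n) * volume (ball (0:Euc n) 1))
        = ∑ y ∈ S, volume (ball y (r/2)) := by
          rw [Finset.sum_congr rfl (fun y hy => hball y), Finset.sum_const, nsmul_eq_mul]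
      _ = volume (⋃ y ∈ S, ball y (r/2)) := hsum.symm
      _ ≤ volume (ball x (R + r/2)) := measure_mono hsub
      _ = _ := hball2
  rw [← mul_assoc] at hkey
  have hc0 : volume (ball (0:Euc n) 1) ≠ 0 := (measure_ball_pos volume 0 one_pos).ne'
  have hct : volume (ball (0:Euc n) 1) ≠ ⊤ := measure_ball_lt_top.ne
  rw [ENNReal.mul_le_mul_iff_left hc0 hct] at hkey
  have h1 : (S.card : ℝ≥0∞) * ENNReal.ofReal ((r/2)^n) = ENNReal.ofReal (S.card * (r/2)^n) := by
    rw [ENNReal.ofReal_mul (by positivity)]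
    congr 1
    simp [ENNReal.ofReal_natCast]
  rw [h1, ENNReal.ofReal_le_ofReal_iff (by positivity)] at hkey
  have hpow : (0:ℝ) < (r/2)^n := by positivity
  rw [div_pow]
  rw [le_div_iff₀ (by positivity)]
  have h2 : ((r:ℝ)/2)^n * 2^n = r^n := by rw [← mul_pow]; norm_num
  calc (S.card : ℝ) * r^n = (S.card * (r/2)^n) * 2^n := by rw [mul_assoc, h2]
    _ ≤ (R + r/2)^n * 2^n := by nlinarith [pow_pos hpow n, pow_pos (show (0:ℝ)<2 by norm_num) n, mul_le_mul_of_nonneg_right hkey (le_of_lt (pow_pos (show (0:ℝ)<2 by norm_num) n))]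
    _ = ((R + r/2)*2)^n := by rw [mul_pow]
    _ = (2*R + r)^n := by ring_nf

lemma pack (n : ℕ) (x : Euc n) {R r : ℝ} (hr : 0 < r) (hR : 0 ≤ R) :
    ∃ S : Finset (Euc n), closedBall x R ⊆ (⋃ y ∈ S, ball y r) ∧
      (S.card : ℝ) ≤ ((2*R + r)/r)^n := by
  classical
  set P : Finset (Euc n) → Prop := fun S => ↑S ⊆ closedBall x R ∧
    (S : Set (Euc n)).Pairwise fun a b => r ≤ dist a b with hP
  set A : Set ℕ := {k | ∃ S, P S ∧ S.card = k} with hA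
  have hAb : ∀ k ∈ A, (k:ℝ) ≤ ((2*R + r)/r)^n := by
    rintro k ⟨S, ⟨h1, h2⟩, rfl⟩
    exact sep_card_bound n x hr hR S h1 h2
  have hbdd : BddAbove A := ⟨Nat.ceil (((2*R + r)/r)^n), fun k hk =>
    Nat.cast_le.mp ((hAb k hk).trans (Nat.le_ceil _))⟩
  have hne : A.Nonempty := ⟨0, ∅, ⟨by simp, by simp⟩, rfl⟩
  obtain ⟨S, hPS, hcard⟩ := Nat.sSup_mem hne hbdd
  refine ⟨S, ?_, hAb S.card ⟨S, hPS, rfl⟩⟩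
  intro z hz
  by_contra hzU
  simp only [mem_iUnion, mem_ball, not_exists, not_lt] at hzU
  have hzsep : ∀ y ∈ S, r ≤ dist z y := fun y hy => (hzU y hy)
  have hzS : z ∉ S := fun h => by
    have := hzsep z h; simp at this; linarith
  have hPS' : P (insert z S) := by
    constructor
    · intro w hw
      rcases Finset.mem_coe.mp hw |> Finset.mem_insert.mp with rfl | hw'
      · exact hz
      · exact hPS.1 hw'
    · rw [Finset.coe_insert]
      refine Set.Pairwise.insert hPS.2 ?_
      intro b hb hzb
      exact ⟨hzsep b hb, by rw [dist_comm]; exact hzsep b hb⟩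
  have : S.card + 1 ∈ A := ⟨insert z S, hPS', by rw [Finset.card_insert_of_notMem hzS]⟩
  have := le_csSup hbdd this
  rw [hcard] at this
  omega

def covSet (n : ℕ) (E : Set (Euc n)) (δ : ℝ) : Set ℕ :=
  { k : ℕ | ∃ U : Fin k → Set (Euc n), E ⊆ ⋃ i, U i ∧ ∀ i, diam (U i) ≤ δ }

/-- A finite family of small sets covering `E` gives membership in `covSet`. -/
lemma mem_covSet_finset {n : ℕ} {E : Set (Euc n)} {δ : ℝ} (𝒱 : Finset (Set (Euc n)))
    (hcov : E ⊆ ⋃₀ ↑𝒱) (hd : ∀ V ∈ 𝒱, diam V ≤ δ) : 𝒱.card ∈ covSet n E δ := by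
  refine ⟨fun i => ((𝒱.equivFin.symm i : {x // x ∈ 𝒱}) : Set (Euc n)), ?_, ?_⟩
  · intro x hx
    obtain ⟨V, hV, hxV⟩ := hcov hx
    refine mem_iUnion.mpr ⟨𝒱.equivFin ⟨V, hV⟩, ?_⟩
    simp [hxV]
  · intro i
    exact hd _ (𝒱.equivFin.symm i).2

lemma covNum_le_finset {n : ℕ} {E : Set (Euc n)} {δ : ℝ} (𝒱 : Finset (Set (Euc n)))
    (hcov : E ⊆ ⋃₀ ↑𝒱) (hd : ∀ V ∈ 𝒱, diam V ≤ δ) : covNum n E δ ≤ 𝒱.card :=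
  Nat.sInf_le (mem_covSet_finset 𝒱 hcov hd)

/-- Quantitative covering: a subset of a ball has controlled covering number. -/
lemma covNum_ball_bound {n : ℕ} {A : Set (Euc n)} {x : Euc n} {R δ : ℝ}
    (hA : A ⊆ closedBall x R) (hR : 0 ≤ R) (hδ : 0 < δ) :
    (covNum n A δ : ℝ) ≤ ((4*R + δ)/δ)^n := by
  classical
  obtain ⟨S, hcov, hcard⟩ := pack n x (show (0:ℝ) < δ/2 by linarith) hR
  have h2 : (2*R + δ/2)/(δ/2) = (4*R + δ)/δ := by
    rw [div_eq_div_iff (by linarith) (by linarith)]; ring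
  rw [h2] at hcard
  set 𝒱 : Finset (Set (Euc n)) := S.image (fun y => ball y (δ/2)) with h𝒱
  have hc : covNum n A δ ≤ 𝒱.card := by
    apply covNum_le_finset
    · intro z hz
      have := hcov (hA hz)
      rw [mem_iUnion₂] at this
      obtain ⟨y, hy, hzy⟩ := this
      exact ⟨ball y (δ/2), Finset.mem_coe.mpr (Finset.mem_image_of_mem _ hy), hzy⟩
    · intro V hV
      obtain ⟨y, _, rfl⟩ := Finset.mem_image.mp hV
      calc diam (ball y (δ/2)) ≤ 2 * (δ/2) := diam_ball (by linarith)
        _ = δ := by ring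
  calc (covNum n A δ : ℝ) ≤ (𝒱.card : ℝ) := by exact_mod_cast hc
    _ ≤ (S.card : ℝ) := by exact_mod_cast Finset.card_image_le
    _ ≤ _ := hcard

/-- covSet is nonempty for a bounded set. -/
lemma covSet_nonempty {n : ℕ} {A : Set (Euc n)} (hA : Bornology.IsBounded A) {δ : ℝ}
    (hδ : 0 < δ) : (covSet n A δ).Nonempty := by
  obtain ⟨R, hR, hsub⟩ : ∃ R, 0 ≤ R ∧ A ⊆ closedBall 0 R := by
    obtain ⟨R, hsub⟩ := hA.subset_closedBall 0
    exact ⟨max R 0, le_max_right _ _, hsub.trans (closedBall_subset_closedBall (le_max_left _ _))⟩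
  obtain ⟨S, hcov, -⟩ := pack n 0 (show (0:ℝ) < δ/2 by linarith) hR
  classical
  refine ⟨(S.image (fun y => ball y (δ/2))).card,
    mem_covSet_finset (S.image (fun y => ball y (δ/2))) ?_ ?_⟩
  · intro z hz
    have := hcov (hsub hz)
    rw [mem_iUnion₂] at this
    obtain ⟨y, hy, hzy⟩ := this
    exact ⟨ball y (δ/2), Finset.mem_coe.mpr (Finset.mem_image_of_mem _ hy), hzy⟩
  · intro V hV
    obtain ⟨y, -, rfl⟩ := Finset.mem_image.mp hV
    calc diam (ball y (δ/2)) ≤ 2 * (δ/2) := diam_ball (by linarith)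
      _ = δ := by ring

lemma exists_finset_of_covNum {n : ℕ} {E : Set (Euc n)} {δ : ℝ}
    (h : (covSet n E δ).Nonempty) :
    ∃ 𝒱 : Finset (Set (Euc n)), E ⊆ ⋃₀ ↑𝒱 ∧ (∀ V ∈ 𝒱, diam V ≤ δ) ∧
      𝒱.card ≤ covNum n E δ := by
  classical
  obtain ⟨U, hcov, hd⟩ : covNum n E δ ∈ covSet n E δ := Nat.sInf_mem h
  refine ⟨Finset.univ.image U, ?_, ?_, ?_⟩
  · intro x hx
    obtain ⟨i, hi⟩ := mem_iUnion.mp (hcov hx)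
    exact ⟨U i, by simp, hi⟩
  · intro V hV
    obtain ⟨i, -, rfl⟩ := Finset.mem_image.mp hV
    exact hd i
  · simpa using Finset.card_image_le (s := Finset.univ) (f := U)

lemma covNum_sUnion_le {n : ℕ} (t : Finset (Set (Euc n))) {δ : ℝ} (hδ : 0 < δ)
    (hbdd : ∀ U ∈ t, Bornology.IsBounded U) {E : Set (Euc n)} (hE : E ⊆ ⋃₀ ↑t) :
    covNum n E δ ≤ ∑ U ∈ t, covNum n U δ := by
  classical
  have h : ∀ U ∈ t, ∃ 𝒱 : Finset (Set (Euc n)), U ⊆ ⋃₀ ↑𝒱 ∧ (∀ V ∈ 𝒱, diam V ≤ δ) ∧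
      𝒱.card ≤ covNum n U δ := fun U hU =>
    exists_finset_of_covNum (covSet_nonempty (hbdd U hU) hδ)
  choose F hF1 hF2 hF3 using h
  set 𝒱 : Finset (Set (Euc n)) := t.attach.biUnion (fun U => F U U.2) with h𝒱
  have hc : covNum n E δ ≤ 𝒱.card := by
    apply covNum_le_finset
    · intro x hx
      obtain ⟨U, hU, hxU⟩ := hE hx
      obtain ⟨V, hV, hxV⟩ := hF1 U hU hxU
      exact ⟨V, Finset.mem_coe.mpr (Finset.mem_biUnion.mpr ⟨⟨U, hU⟩, Finset.mem_attach _ _, hV⟩), hxV⟩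
    · intro V hV
      obtain ⟨U, -, hV'⟩ := Finset.mem_biUnion.mp hV
      exact hF2 U U.2 V hV'
  calc covNum n E δ ≤ 𝒱.card := hc
    _ ≤ ∑ U ∈ t.attach, (F U U.2).card := Finset.card_biUnion_le
    _ ≤ ∑ U ∈ t.attach, covNum n (U : Set (Euc n)) δ :=
        Finset.sum_le_sum (fun U _ => hF3 U U.2)
    _ = ∑ U ∈ t, covNum n U δ := Finset.sum_attach t (fun U => covNum n U δ)

/-- Per-set quantitative bound. -/
lemma covNum_of_diam {n : ℕ} {U : Set (Euc n)} {r : ℝ} (hr : 0 < r) (hd : r ≤ diam U) :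
    (covNum n U r : ℝ) ≤ (5 * diam U / r)^n := by
  have hbdd : Bornology.IsBounded U := by
    by_contra h
    rw [diam_eq_zero_of_unbounded h] at hd
    linarith
  have hne : U.Nonempty := by
    rcases U.eq_empty_or_nonempty with rfl | h
    · simp [diam_empty] at hd; linarith
    · exact h
  obtain ⟨x, hx⟩ := hne
  have hsub : U ⊆ closedBall x (diam U) := fun y hy =>
    mem_closedBall.mpr (dist_le_diam_of_mem hbdd hy hx)
  have h0 : (0:ℝ) ≤ diam U := diam_nonneg
  calc (covNum n U r : ℝ) ≤ ((4 * diam U + r)/r)^n := covNum_ball_bound hsub h0 hr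
    _ ≤ (5 * diam U / r)^n := by
        apply pow_le_pow_left₀ (by positivity)
        gcongr
        linarith

lemma bounded_of_diam_ge {n : ℕ} {U : Set (Euc n)} {r : ℝ} (hr : 0 < r) (hd : r ≤ diam U) :
    Bornology.IsBounded U := by
  by_contra h
  rw [diam_eq_zero_of_unbounded h] at hd
  linarith

/-- The set is nonempty, so `covNum` is positive. -/
lemma covNum_pos {n : ℕ} {E : Set (Euc n)} (hE : Bornology.IsBounded E) (hne : E.Nonempty)
    {δ : ℝ} (hδ : 0 < δ) : 0 < covNum n E δ := by
  rcases Nat.eq_zero_or_pos (covNum n E δ) with h | h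
  · exfalso
    have hm : covNum n E δ ∈ covSet n E δ := Nat.sInf_mem (covSet_nonempty hE hδ)
    rw [h] at hm
    obtain ⟨U, hcov, -⟩ := hm
    obtain ⟨x, hx⟩ := hne
    obtain ⟨i, -⟩ := mem_iUnion.mp (hcov hx)
    exact i.elim0
  · exact h

/-- Lower bound for `coverSum`. -/
lemma coverSum_lower {n : ℕ} {E : Set (Euc n)} {θ d r : ℝ}
    (hd0 : 0 ≤ d) (hdn : d ≤ n) (hr : 0 < r) :
    ENNReal.ofReal ((covNum n E r : ℝ) * ((5:ℝ)^n)⁻¹ * r^(n:ℝ) * (r^θ)^(d - (n:ℝ)))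
      ≤ coverSum n E θ d r := by
  apply le_sInf
  rintro T ⟨𝒰, hcount, hcov, hdiam, rfl⟩
  have hrd : (0:ℝ) < r ^ d := Real.rpow_pos_of_pos hr d
  have hterm : ∀ U : ↥𝒰, ENNReal.ofReal (r ^ d)
      ≤ ENNReal.ofReal (diam (U : Set (Euc n)) ^ d) := by
    intro U
    exact ENNReal.ofReal_le_ofReal (Real.rpow_le_rpow hr.le (hdiam U U.2).1 hd0)
  by_cases hfin : 𝒰.Finite
  · obtain ⟨t, rfl⟩ : ∃ t : Finset (Set (Euc n)), (↑t : Set (Set (Euc n))) = 𝒰 :=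
      ⟨hfin.toFinset, hfin.coe_toFinset⟩
    rw [Finset.tsum_subtype' t (fun U => ENNReal.ofReal (diam U ^ d))]
    rw [← ENNReal.ofReal_sum_of_nonneg (fun U _ => Real.rpow_nonneg diam_nonneg d)]
    apply ENNReal.ofReal_le_ofReal
    -- real inequality
    have hrθ : (0:ℝ) < r ^ θ := Real.rpow_pos_of_pos hr θ
    have hrn : (0:ℝ) < r ^ n := pow_pos hr n
    have h5 : (0:ℝ) < (5:ℝ)^n := by positivity
    have he : (0:ℝ) < (r^θ)^((n:ℝ) - d) := Real.rpow_pos_of_pos hrθ _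
    have step1 : (covNum n E r : ℝ) ≤ ∑ U ∈ t, (covNum n U r : ℝ) := by
      exact_mod_cast covNum_sUnion_le t hr
        (fun U hU => bounded_of_diam_ge hr (hdiam U hU).1) hcov
    have step2 : ∀ U ∈ t, (covNum n U r : ℝ)
        ≤ (5:ℝ)^n / r^n * (r^θ)^((n:ℝ) - d) * (diam U ^ d) := by
      intro U hU
      have h1 : r ≤ diam U := (hdiam U hU).1
      have hpos : (0:ℝ) < diam U := lt_of_lt_of_le hr h1
      have h2 : diam U ≤ r ^ θ := (hdiam U hU).2
      calc (covNum n U r : ℝ) ≤ (5 * diam U / r)^n := covNum_of_diam hr h1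
        _ = (5:ℝ)^n / r^n * (diam U)^n := by rw [div_pow, mul_pow]; ring
        _ = (5:ℝ)^n / r^n * ((diam U)^d * (diam U)^((n:ℝ) - d)) := by
            rw [← Real.rpow_add hpos, ← Real.rpow_natCast (diam U) n]
            ring_nf
        _ ≤ (5:ℝ)^n / r^n * ((diam U)^d * (r^θ)^((n:ℝ) - d)) := by
            have := Real.rpow_le_rpow diam_nonneg h2 (by linarith : (0:ℝ) ≤ (n:ℝ) - d)
            have hd' : (0:ℝ) ≤ (diam U)^d := Real.rpow_nonneg diam_nonneg d
            gcongr
        _ = (5:ℝ)^n / r^n * (r^θ)^((n:ℝ) - d) * (diam U ^ d) := by ring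
    have step3 : (covNum n E r : ℝ)
        ≤ (5:ℝ)^n / r^n * (r^θ)^((n:ℝ) - d) * ∑ U ∈ t, diam U ^ d := by
      rw [Finset.mul_sum]
      exact step1.trans (Finset.sum_le_sum step2)
    have hrw : (r:ℝ)^(n:ℝ) = r^n := Real.rpow_natCast r n
    have hrw2 : (r^θ)^(d - (n:ℝ)) = ((r^θ)^((n:ℝ) - d))⁻¹ := by
      rw [← Real.rpow_neg hrθ.le]
      ring_nf
    rw [hrw, hrw2]
    rw [show (covNum n E r : ℝ) * ((5:ℝ)^n)⁻¹ * r^n * ((r^θ)^((n:ℝ) - d))⁻¹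
      = (covNum n E r : ℝ) / ((5:ℝ)^n / r^n * (r^θ)^((n:ℝ) - d)) by field_simp]
    rw [div_le_iff₀ (by positivity)]
    calc (covNum n E r : ℝ) ≤ (5:ℝ)^n / r^n * (r^θ)^((n:ℝ) - d) * ∑ U ∈ t, diam U ^ d := step3
      _ = (∑ U ∈ t, diam U ^ d) * ((5:ℝ)^n / r^n * (r^θ)^((n:ℝ) - d)) := by ring
  · -- infinite cover: sum is infinite
    have : (∑' U : ↥𝒰, ENNReal.ofReal (diam (U : Set (Euc n)) ^ d)) = ⊤ := by
      by_contra hne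
      have hfin2 := ENNReal.finite_const_le_of_tsum_ne_top hne
        (ε := ENNReal.ofReal (r ^ d)) (by simp [ENNReal.ofReal_eq_zero, not_le, hrd])
      have : (Set.univ : Set ↥𝒰).Finite := by
        apply hfin2.subset
        intro U _
        exact hterm U
      rw [Set.finite_univ_iff] at this
      exact hfin (Set.finite_coe_iff.mp this)
    rw [this]
    exact le_top

lemma diam_closedBall_euc {n : ℕ} (hn : 0 < n) (y : Euc n) {ρ : ℝ} (hρ : 0 ≤ ρ) :
    diam (closedBall y ρ) = 2 * ρ := by
  apply le_antisymm (diam_closedBall hρ)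
  set e : Euc n := EuclideanSpace.single (⟨0, hn⟩ : Fin n) (1:ℝ) with he
  have hne : ‖e‖ = 1 := by
    rw [he, EuclideanSpace.norm_single]; norm_num
  have h1 : y + ρ • e ∈ closedBall y ρ := by
    rw [mem_closedBall, dist_eq_norm]
    simp [norm_smul, hne, abs_of_nonneg hρ]
  have h2 : y - ρ • e ∈ closedBall y ρ := by
    rw [mem_closedBall, dist_eq_norm]
    simp [norm_smul, hne, abs_of_nonneg hρ]
  have h3 : dist (y + ρ • e) (y - ρ • e) = 2 * ρ := by
    rw [dist_eq_norm]
    have : (y + ρ • e) - (y - ρ • e) = (2*ρ) • e := by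
      rw [two_mul, add_smul]; abel
    rw [this, norm_smul, hne]
    rw [mul_one, Real.norm_eq_abs, abs_of_nonneg (by linarith)]
  calc 2 * ρ = dist (y + ρ • e) (y - ρ • e) := h3.symm
    _ ≤ diam (closedBall y ρ) := dist_le_diam_of_mem isBounded_closedBall h1 h2

/-- Every admissible cover has at least one set of diameter ≥ r. -/
lemma coverSum_pos {n : ℕ} {E : Set (Euc n)} (hne : E.Nonempty) {θ d r : ℝ}
    (hd0 : 0 ≤ d) (hr : 0 < r) :
    ENNReal.ofReal (r ^ d) ≤ coverSum n E θ d r := by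
  apply le_sInf
  rintro T ⟨𝒰, -, hcov, hdiam, rfl⟩
  obtain ⟨x, hx⟩ := hne
  obtain ⟨U, hU, hxU⟩ := hcov hx
  calc ENNReal.ofReal (r ^ d) ≤ ENNReal.ofReal (diam U ^ d) :=
        ENNReal.ofReal_le_ofReal (Real.rpow_le_rpow hr.le (hdiam U hU).1 hd0)
    _ ≤ ∑' V : ↥𝒰, ENNReal.ofReal (diam (V : Set (Euc n)) ^ d) :=
        ENNReal.le_tsum (⟨U, hU⟩ : ↥𝒰)

/-- Upper bound for `coverSum` via a cover by balls of radius `r/2`. -/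
lemma coverSum_upper {n : ℕ} (hn : 0 < n) {E : Set (Euc n)} {x₀ : Euc n} {D : ℝ}
    (hD : 0 ≤ D) (hsub : E ⊆ closedBall x₀ D) {θ d r : ℝ}
    (hθ1 : θ ≤ 1) (hd0 : 0 ≤ d) (hr : 0 < r) (hr1 : r < 1) :
    coverSum n E θ d r ≤ ENNReal.ofReal (((4*D + r)/r)^n * r^d) := by
  classical
  have hr2 : (0:ℝ) < r/2 := by linarith
  obtain ⟨S, hcov, hcard⟩ := pack n x₀ hr2 hD
  have hcard' : (S.card : ℝ) ≤ ((4*D + r)/r)^n := by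
    have : (2*D + r/2)/(r/2) = (4*D + r)/r := by
      rw [div_eq_div_iff (by linarith) (by linarith)]; ring
    rwa [this] at hcard
  set t : Finset (Set (Euc n)) := S.image (fun y => closedBall y (r/2)) with ht
  have hdiam : ∀ U ∈ t, diam U = r := by
    intro U hU
    obtain ⟨y, -, rfl⟩ := Finset.mem_image.mp hU
    rw [diam_closedBall_euc hn y hr2.le]; ring
  have hmem : (∑' U : ↥(↑t : Set (Set (Euc n))), ENNReal.ofReal (diam (U : Set (Euc n)) ^ d))
      ∈ { T : ℝ≥0∞ | ∃ 𝒰 : Set (Set (Euc n)), 𝒰.Countable ∧ E ⊆ ⋃₀ 𝒰 ∧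
      (∀ U ∈ 𝒰, r ≤ diam U ∧ diam U ≤ r ^ θ) ∧
      T = ∑' U : 𝒰, ENNReal.ofReal (diam (U : Set (Euc n)) ^ d) } := by
    refine ⟨↑t, t.countable_toSet, ?_, ?_, rfl⟩
    · intro x hx
      have := hcov (hsub hx)
      rw [mem_iUnion₂] at this
      obtain ⟨y, hy, hxy⟩ := this
      exact ⟨closedBall y (r/2), Finset.mem_coe.mpr (Finset.mem_image_of_mem _ hy),
        ball_subset_closedBall hxy⟩
    · intro U hU
      rw [hdiam U hU]
      constructor
      · exact le_refl r
      · calc r = r ^ (1:ℝ) := (Real.rpow_one r).symm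
          _ ≤ r ^ θ := Real.rpow_le_rpow_of_exponent_ge hr hr1.le hθ1
  calc coverSum n E θ d r ≤ _ := sInf_le hmem
    _ = ∑ U ∈ t, ENNReal.ofReal (diam U ^ d) :=
        Finset.tsum_subtype' t (fun U => ENNReal.ofReal (diam U ^ d))
    _ ≤ t.card • ENNReal.ofReal (r ^ d) := by
        apply Finset.sum_le_card_nsmul
        intro U hU
        rw [hdiam U hU]
    _ = (t.card : ℝ≥0∞) * ENNReal.ofReal (r ^ d) := by rw [nsmul_eq_mul]
    _ ≤ ENNReal.ofReal (((4*D + r)/r)^n * r^d) := by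
        rw [ENNReal.ofReal_mul (by positivity)]
        apply mul_le_mul_left ?_ _
        rw [show ((t.card : ℝ≥0∞)) = ENNReal.ofReal (t.card : ℝ) by
          simp [ENNReal.ofReal_natCast]]
        apply ENNReal.ofReal_le_ofReal
        calc (t.card : ℝ) ≤ (S.card : ℝ) := by exact_mod_cast Finset.card_image_le
          _ ≤ _ := hcard'

section AuxVars
variable {n : ℕ} {E : Set (Euc n)} {x₀ : Euc n} {D : ℝ}

/-- Key lower bound on `Squot`. -/
lemma Squot_key (hn : 0 < n) (hE : Bornology.IsBounded E) (hEne : E.Nonempty)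
    (hD : 0 ≤ D) (hsub : E ⊆ closedBall x₀ D) {θ d r : ℝ}
    (hθ1 : θ ≤ 1) (hd0 : 0 ≤ d) (hdn : d ≤ n) (hr : 0 < r) (hr1 : r < 1) :
    Real.log (covNum n E r) / (-Real.log r) - (n:ℝ) + θ*((n:ℝ) - d)
      - (n:ℝ)*Real.log 5 / (-Real.log r) ≤ Squot n E θ d r := by
  have hl : Real.log r < 0 := Real.log_neg hr hr1
  have hl' : Real.log r ≠ 0 := ne_of_lt hl
  have hL : (0:ℝ) < -Real.log r := by linarith
  have hN : (0:ℝ) < (covNum n E r : ℝ) := by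
    exact_mod_cast covNum_pos hE hEne hr
  have hrθ : (0:ℝ) < r ^ θ := Real.rpow_pos_of_pos hr θ
  set b : ℝ := (covNum n E r : ℝ) * ((5:ℝ)^n)⁻¹ * r^(n:ℝ) * (r^θ)^(d - (n:ℝ)) with hb
  have hb0 : 0 < b := by
    apply mul_pos (mul_pos (mul_pos hN (by positivity)) (Real.rpow_pos_of_pos hr _))
    exact Real.rpow_pos_of_pos hrθ _
  have hCtop : coverSum n E θ d r ≠ ⊤ :=
    ne_top_of_le_ne_top ENNReal.ofReal_ne_top (coverSum_upper hn hD hsub hθ1 hd0 hr hr1)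
  have hbS : b ≤ Sval n E θ d r := by
    have := ENNReal.toReal_mono hCtop (coverSum_lower hd0 hdn hr)
    rwa [ENNReal.toReal_ofReal hb0.le] at this
  have hSpos : 0 < Sval n E θ d r := lt_of_lt_of_le hb0 hbS
  have hlogb : Real.log b = Real.log (covNum n E r) - (n:ℝ)*Real.log 5
      + (n:ℝ)*Real.log r + (d - (n:ℝ))*(θ*Real.log r) := by
    rw [hb, Real.log_mul (by positivity) (ne_of_gt (Real.rpow_pos_of_pos hrθ _)),
      Real.log_mul (by positivity) (ne_of_gt (Real.rpow_pos_of_pos hr _)),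
      Real.log_mul (ne_of_gt hN) (by positivity),
      Real.log_inv, Real.log_pow, Real.log_rpow hr, Real.log_rpow hrθ, Real.log_rpow hr]
    push_cast
    ring
  have hmono : Real.log b ≤ Real.log (Sval n E θ d r) := Real.log_le_log hb0 hbS
  have hdiv : Real.log b / (-Real.log r) ≤ Squot n E θ d r := by
    rw [Squot]
    gcongr
  refine le_trans (le_of_eq ?_) hdiv
  rw [hlogb]
  field_simp
  ring

/-- Upper bound on `Squot`. -/
lemma Squot_upper (hn : 0 < n) (hE : Bornology.IsBounded E) (hEne : E.Nonempty)
    (hD : 0 ≤ D) (hsub : E ⊆ closedBall x₀ D) {θ d r : ℝ}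
    (hθ1 : θ ≤ 1) (hd0 : 0 ≤ d) (hr : 0 < r) (hr1 : r < 1) :
    Squot n E θ d r ≤ (n:ℝ)*Real.log (4*D+1) / (-Real.log r) + (n:ℝ) - d := by
  have hl : Real.log r < 0 := Real.log_neg hr hr1
  have hl' : Real.log r ≠ 0 := ne_of_lt hl
  have hL : (0:ℝ) < -Real.log r := by linarith
  have hrd : (0:ℝ) < r ^ d := Real.rpow_pos_of_pos hr d
  have hCtop : coverSum n E θ d r ≠ ⊤ :=
    ne_top_of_le_ne_top ENNReal.ofReal_ne_top (coverSum_upper hn hD hsub hθ1 hd0 hr hr1)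
  have hSpos : 0 < Sval n E θ d r := by
    have := ENNReal.toReal_mono hCtop (coverSum_pos hEne hd0 hr)
    rw [ENNReal.toReal_ofReal hrd.le] at this
    exact lt_of_lt_of_le hrd this
  have hB : Sval n E θ d r ≤ ((4*D+1)/r)^n * r^d := by
    have h1 := ENNReal.toReal_mono ENNReal.ofReal_ne_top
      (coverSum_upper hn hD hsub hθ1 hd0 hr hr1)
    rw [ENNReal.toReal_ofReal (by positivity)] at h1
    refine h1.trans ?_
    have h2 : ((4*D + r)/r)^n ≤ ((4*D+1)/r)^n := by
      apply pow_le_pow_left₀ (by positivity)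
      gcongr <;> linarith
    exact mul_le_mul_of_nonneg_right h2 hrd.le
  have hlog : Real.log (Sval n E θ d r) ≤ (n:ℝ)*Real.log (4*D+1) - (n:ℝ)*Real.log r
      + d*Real.log r := by
    calc Real.log (Sval n E θ d r) ≤ Real.log (((4*D+1)/r)^n * r^d) := Real.log_le_log hSpos hB
      _ = (n:ℝ)*Real.log (4*D+1) - (n:ℝ)*Real.log r + d*Real.log r := by
          rw [Real.log_mul (by positivity) (ne_of_gt hrd), Real.log_pow,
            Real.log_div (by linarith) (ne_of_gt hr), Real.log_rpow hr]
          push_cast; ring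
  have h2 : Real.log (Sval n E θ d r) / (-Real.log r)
      ≤ ((n:ℝ)*Real.log (4*D+1) - (n:ℝ)*Real.log r + d*Real.log r) / (-Real.log r) := by
    gcongr
  have h3 : ((n:ℝ)*Real.log (4*D+1) - (n:ℝ)*Real.log r + d*Real.log r) / (-Real.log r)
      = (n:ℝ)*Real.log (4*D+1) / (-Real.log r) + (n:ℝ) - d := by
    field_simp
    ring
  rw [Squot]
  exact h2.trans_eq h3

/-- Upper bound on the box quotient. -/
lemma Q_upper (hE : Bornology.IsBounded E) (hEne : E.Nonempty)
    (hD : 0 ≤ D) (hsub : E ⊆ closedBall x₀ D) {δ : ℝ} (hδ : 0 < δ) (hδ1 : δ < 1) :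
    Real.log (covNum n E δ) / (-Real.log δ)
      ≤ (n:ℝ)*Real.log (4*D+1) / (-Real.log δ) + (n:ℝ) := by
  have hl : Real.log δ < 0 := Real.log_neg hδ hδ1
  have hl' : Real.log δ ≠ 0 := ne_of_lt hl
  have hL : (0:ℝ) < -Real.log δ := by linarith
  have hN : (0:ℝ) < (covNum n E δ : ℝ) := by exact_mod_cast covNum_pos hE hEne hδ
  have hB : (covNum n E δ : ℝ) ≤ ((4*D+1)/δ)^n := by
    refine (covNum_ball_bound hsub hD hδ).trans ?_
    apply pow_le_pow_left₀ (by positivity)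
    gcongr <;> linarith
  have hlog : Real.log (covNum n E δ) ≤ (n:ℝ)*Real.log (4*D+1) - (n:ℝ)*Real.log δ := by
    calc Real.log (covNum n E δ) ≤ Real.log (((4*D+1)/δ)^n) := Real.log_le_log hN hB
      _ = (n:ℝ)*Real.log (4*D+1) - (n:ℝ)*Real.log δ := by
          rw [Real.log_pow, Real.log_div (by linarith) (ne_of_gt hδ)]
          push_cast; ring
  have h2 : Real.log (covNum n E δ) / (-Real.log δ)
      ≤ ((n:ℝ)*Real.log (4*D+1) - (n:ℝ)*Real.log δ) / (-Real.log δ) := by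
    gcongr
  have h3 : ((n:ℝ)*Real.log (4*D+1) - (n:ℝ)*Real.log δ) / (-Real.log δ)
      = (n:ℝ)*Real.log (4*D+1) / (-Real.log δ) + (n:ℝ) := by
    field_simp
    ring
  exact h2.trans_eq h3

lemma Q_nonneg (hE : Bornology.IsBounded E) (hEne : E.Nonempty) {δ : ℝ}
    (hδ : 0 < δ) (hδ1 : δ < 1) :
    0 ≤ Real.log (covNum n E δ) / (-Real.log δ) := by
  have hl : Real.log δ < 0 := Real.log_neg hδ hδ1
  have hN : (1:ℝ) ≤ (covNum n E δ : ℝ) := by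
    exact_mod_cast covNum_pos hE hEne hδ
  exact div_nonneg (Real.log_nonneg hN) (by linarith)

lemma div_neg_log_tendsto (c : ℝ) :
    Tendsto (fun r : ℝ => c / (-Real.log r)) (𝓝[>] (0:ℝ)) (𝓝 0) := by
  have h1 : Tendsto (fun r : ℝ => -Real.log r) (𝓝[>] (0:ℝ)) atTop :=
    tendsto_neg_atBot_atTop.comp Real.tendsto_log_nhdsGT_zero
  exact Tendsto.div_atTop tendsto_const_nhds h1

lemma exists_D (hE : Bornology.IsBounded E) :
    ∃ D : ℝ, 0 ≤ D ∧ E ⊆ closedBall (0 : Euc n) D := by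
  obtain ⟨R, hsub⟩ := hE.subset_closedBall 0
  exact ⟨max R 0, le_max_right _ _, hsub.trans (closedBall_subset_closedBall (le_max_left _ _))⟩

lemma hIoo_mem : Ioo (0:ℝ) 1 ∈ 𝓝[>] (0:ℝ) :=
  Ioo_mem_nhdsGT_of_mem ⟨le_refl 0, one_pos⟩

lemma Squot_bdd (hn : 0 < n) (hE : Bornology.IsBounded E) (hEne : E.Nonempty)
    {θ d : ℝ} (hθ1 : θ ≤ 1) (hd0 : 0 ≤ d) :
    IsBoundedUnder (· ≤ ·) (𝓝[>] (0:ℝ)) (fun r => Squot n E θ d r) := by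
  obtain ⟨D, hD, hsub⟩ := exists_D hE
  refine ⟨(n:ℝ) + 1, ?_⟩
  rw [eventually_map]
  have hsmall : ∀ᶠ r in 𝓝[>] (0:ℝ), (n:ℝ)*Real.log (4*D+1) / (-Real.log r) < 1 :=
    (div_neg_log_tendsto _).eventually (gt_mem_nhds one_pos)
  filter_upwards [hIoo_mem, hsmall] with r hr hs
  have := Squot_upper hn hE hEne hD hsub hθ1 hd0 hr.1 hr.2
  linarith

lemma Q_bdd_below (hE : Bornology.IsBounded E) (hEne : E.Nonempty) :
    IsBoundedUnder (· ≥ ·) (𝓝[>] (0:ℝ))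
      (fun δ : ℝ => Real.log (covNum n E δ) / (-Real.log δ)) := by
  refine ⟨0, ?_⟩
  rw [eventually_map]
  filter_upwards [hIoo_mem] with δ hδ
  exact Q_nonneg hE hEne hδ.1 hδ.2

lemma contra_liminf (hn : 0 < n) (hE : Bornology.IsBounded E) (hEne : E.Nonempty)
    {θ d : ℝ} (hθ : 0 < θ) (hθ1 : θ ≤ 1) (hd0 : 0 ≤ d) (hdn : d ≤ n) (hdlt : d < n)
    (hbox : lowerBoxDim n E = n) :
    ∀ᶠ r in 𝓝[>] (0:ℝ), θ*((n:ℝ)-d)/2 ≤ Squot n E θ d r := by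
  obtain ⟨D, hD, hsub⟩ := exists_D hE
  set ε := θ*((n:ℝ)-d) with hε
  have hεpos : 0 < ε := mul_pos hθ (by linarith)
  have hkey : ∀ᶠ r in 𝓝[>] (0:ℝ),
      Real.log (covNum n E r) / (-Real.log r) - (n:ℝ) + ε
        - (n:ℝ)*Real.log 5 / (-Real.log r) ≤ Squot n E θ d r := by
    filter_upwards [hIoo_mem] with r hr
    exact Squot_key hn hE hEne hD hsub hθ1 hd0 hdn hr.1 hr.2
  have hsmall : ∀ᶠ r in 𝓝[>] (0:ℝ), (n:ℝ)*Real.log 5 / (-Real.log r) < ε/4 :=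
    (div_neg_log_tendsto _).eventually (gt_mem_nhds (by linarith))
  have hQ : ∀ᶠ r in 𝓝[>] (0:ℝ),
      (n:ℝ) - ε/4 < Real.log (covNum n E r) / (-Real.log r) := by
    apply eventually_lt_of_lt_liminf ?_ (Q_bdd_below hE hEne)
    rw [show liminf (fun δ : ℝ => Real.log (covNum n E δ) / (-Real.log δ)) (𝓝[>] 0)
      = lowerBoxDim n E from rfl, hbox]
    linarith
  filter_upwards [hkey, hsmall, hQ] with r h1 h2 h3
  linarith

lemma contra_limsup (hn : 0 < n) (hE : Bornology.IsBounded E) (hEne : E.Nonempty)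
    {θ d : ℝ} (hθ : 0 < θ) (hθ1 : θ ≤ 1) (hd0 : 0 ≤ d) (hdn : d ≤ n) (hdlt : d < n)
    (hbox : upperBoxDim n E = n) :
    ∃ᶠ r in 𝓝[>] (0:ℝ), θ*((n:ℝ)-d)/2 ≤ Squot n E θ d r := by
  obtain ⟨D, hD, hsub⟩ := exists_D hE
  set ε := θ*((n:ℝ)-d) with hε
  have hεpos : 0 < ε := mul_pos hθ (by linarith)
  have hkey : ∀ᶠ r in 𝓝[>] (0:ℝ),
      Real.log (covNum n E r) / (-Real.log r) - (n:ℝ) + ε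
        - (n:ℝ)*Real.log 5 / (-Real.log r) ≤ Squot n E θ d r := by
    filter_upwards [hIoo_mem] with r hr
    exact Squot_key hn hE hEne hD hsub hθ1 hd0 hdn hr.1 hr.2
  have hsmall : ∀ᶠ r in 𝓝[>] (0:ℝ), (n:ℝ)*Real.log 5 / (-Real.log r) < ε/4 :=
    (div_neg_log_tendsto _).eventually (gt_mem_nhds (by linarith))
  have hQ : ∃ᶠ r in 𝓝[>] (0:ℝ),
      (n:ℝ) - ε/4 < Real.log (covNum n E r) / (-Real.log r) := by
    apply frequently_lt_of_lt_limsup ((Q_bdd_below hE hEne).isCoboundedUnder_le)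
    rw [show limsup (fun δ : ℝ => Real.log (covNum n E δ) / (-Real.log δ)) (𝓝[>] 0)
      = upperBoxDim n E from rfl, hbox]
    linarith
  refine (hQ.and_eventually (hkey.and hsmall)).mono ?_
  rintro r ⟨h3, h1, h2⟩
  linarith

end AuxVars

/-- If `\underline{dim}_B E = n` then `\underline{dim}_θ E =
\overline{dim}_θ E = n` for all `θ ∈ (0,1]`; similarly if `\overline{dim}_B E = n` then
`\overline{dim}_θ E = n` for all `θ ∈ (0,1]`. -/
theorem statement18 (n : ℕ) (E : Set (Euc n)) (hE : Bornology.IsBounded E)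
    (hEne : E.Nonempty) :
    (lowerBoxDim n E = n →
      ∀ θ ∈ Ioc (0:ℝ) 1, (∀ d : ℝ, IsLowerInterDim n θ E d → d = n) ∧
        (∀ d : ℝ, IsUpperInterDim n θ E d → d = n)) ∧
    (upperBoxDim n E = n →
      ∀ θ ∈ Ioc (0:ℝ) 1, ∀ d : ℝ, IsUpperInterDim n θ E d → d = n) := by
  rcases Nat.eq_zero_or_pos n with hn0 | hn
  · subst hn0
    refine ⟨fun _ θ _ => ⟨fun d hd => ?_, fun d hd => ?_⟩, fun _ θ _ d hd => ?_⟩ <;>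
    · have h1 := hd.1.1
      have h2 := hd.1.2
      push_cast at h2 ⊢
      linarith
  · have hmain_lo : lowerBoxDim n E = n → ∀ θ ∈ Ioc (0:ℝ) 1, ∀ d : ℝ,
        d ∈ Icc (0:ℝ) n → d < n → ∀ᶠ r in 𝓝[>] (0:ℝ),
          θ*((n:ℝ)-d)/2 ≤ Squot n E θ d r := by
      intro hbox θ hθ d hd hdlt
      exact contra_liminf hn hE hEne hθ.1 hθ.2 hd.1 hd.2 hdlt hbox
    constructor
    · intro hbox θ hθ
      constructor
      · rintro d ⟨hdmem, hlim⟩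
        by_contra hne
        have hdlt : d < n := lt_of_le_of_ne hdmem.2 hne
        have hev := hmain_lo hbox θ hθ d hdmem hdlt
        have hb := Squot_bdd hn hE hEne hθ.2 hdmem.1
        have hle := le_liminf_of_le hb.isCoboundedUnder_ge hev
        rw [hlim] at hle
        have hεpos : 0 < θ*((n:ℝ)-d) := mul_pos hθ.1 (by linarith)
        linarith
      · rintro d ⟨hdmem, hlim⟩
        by_contra hne
        have hdlt : d < n := lt_of_le_of_ne hdmem.2 hne
        have hev := (hmain_lo hbox θ hθ d hdmem hdlt).frequently
        have hb := Squot_bdd hn hE hEne hθ.2 hdmem.1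
        have hle := le_limsup_of_frequently_le hev hb
        rw [hlim] at hle
        have hεpos : 0 < θ*((n:ℝ)-d) := mul_pos hθ.1 (by linarith)
        linarith
    · intro hbox θ hθ
      rintro d ⟨hdmem, hlim⟩
      by_contra hne
      have hdlt : d < n := lt_of_le_of_ne hdmem.2 hne
      have hfreq := contra_limsup hn hE hEne hθ.1 hθ.2 hdmem.1 hdmem.2 hdlt hbox
      have hb := Squot_bdd hn hE hEne hθ.2 hdmem.1
      have hle := le_limsup_of_frequently_le hfreq hb
      rw [hlim] at hle
      have hεpos : 0 < θ*((n:ℝ)-d) := mul_pos hθ.1 (by linarith)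
      linarith
end
end
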